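/- Fix b > 0 and let ρ be the unique positive root of w(x) = (1 - x/2)e^x + ((b-1)/2)x - 1. Then the function h₀(x) = x·w(x)/(e^x - 1)² is strictly decreasing on (0, ρ). -/

import Mathlib

/-!
Differentiating and eliminating `b` through `w` gives
`h₀' = (2 w K - (eˣ - 1)(q eˣ - 1)) / (eˣ - 1)³` with `K = (1 - x) eˣ - 1` and
`q = 1 - x + x²/2`. For `x > 0` we have `K < 0` (from `1 - x < e⁻ˣ`) and `q eˣ > 1`
(`q eˣ` increases from `1`, its derivative being `x²eˣ/2`), so on `(0, ρ)`, where `w > 0`,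
both terms of the numerator are negative.
-/

open Real

noncomputable def w (b x : ℝ) : ℝ := (1 - x / 2) * exp x + (b - 1) / 2 * x - 1

noncomputable def h₀ (b x : ℝ) : ℝ := x * w b x / (exp x - 1) ^ 2

lemma one_sub_mul_exp_lt_one {x : ℝ} (hx : x ≠ 0) : (1 - x) * exp x < 1 := by
  have h := mul_lt_mul_of_pos_right (add_one_lt_exp (neg_ne_zero.mpr hx)) (exp_pos x)
  rwa [← exp_add, neg_add_cancel, exp_zero, neg_add_eq_sub] at h

lemma one_lt_one_sub_add_sq_div_two_mul_exp {x : ℝ} (hx : 0 < x) :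
    1 < (1 - x + x ^ 2 / 2) * exp x := by
  have hmono : StrictMonoOn (fun y => (1 - y + y ^ 2 / 2) * exp y) (Set.Ici 0) := by
    refine strictMonoOn_of_deriv_pos (convex_Ici 0) (by fun_prop) fun y hy => ?_
    rw [interior_Ici] at hy
    have hderiv : HasDerivAt (fun y => (1 - y + y ^ 2 / 2) * exp y) (y ^ 2 / 2 * exp y) y :=
      ((((hasDerivAt_id y).const_sub 1).add
        (((hasDerivAt_id y).pow 2).div_const 2)).mul (hasDerivAt_exp y)).congr_deriv
          (by simp only [Pi.add_apply, Pi.pow_apply, id_eq, Nat.cast_ofNat]; ring)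
    rw [hderiv.deriv]
    have : 0 < y := hy
    positivity
  simpa using hmono Set.self_mem_Ici hx.le hx

lemma hasDerivAt_w (b x : ℝ) : HasDerivAt (w b) ((1 - x) / 2 * exp x + (b - 1) / 2) x :=
  ((((((hasDerivAt_id x).div_const 2).const_sub 1).mul (hasDerivAt_exp x)).add
    ((hasDerivAt_id x).const_mul ((b - 1) / 2))).sub_const 1).congr_deriv
      (by simp only [id_eq]; ring)

lemma hasDerivAt_h₀ (b : ℝ) {x : ℝ} (hx : x ≠ 0) :
    HasDerivAt (h₀ b)
      ((2 * w b x * ((1 - x) * exp x - 1) -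
          (exp x - 1) * ((1 - x + x ^ 2 / 2) * exp x - 1)) / (exp x - 1) ^ 3) x := by
  have hexp : exp x - 1 ≠ 0 := sub_ne_zero.mpr ((exp_eq_one_iff x).not.mpr hx)
  have hquot := ((hasDerivAt_id x).mul (hasDerivAt_w b x)).div
    (((hasDerivAt_exp x).sub_const 1).pow 2) (pow_ne_zero 2 hexp)
  refine hquot.congr_deriv ?_
  simp only [w, id_eq, Nat.cast_ofNat, Pi.mul_apply, Pi.pow_apply]
  field_simp
  ring

theorem stmt_3_general (b ρ : ℝ)
    (hpos : ∀ x : ℝ, 0 < x → x < ρ →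
      0 < (1 - x / 2) * Real.exp x + (b - 1) / 2 * x - 1) :
    StrictAntiOn
      (fun x : ℝ => x * ((1 - x / 2) * Real.exp x + (b - 1) / 2 * x - 1) /
        (Real.exp x - 1) ^ 2)
      (Set.Ioo 0 ρ) := by
  change StrictAntiOn (h₀ b) (Set.Ioo 0 ρ)
  have hderiv : ∀ x ∈ Set.Ioo 0 ρ, HasDerivAt (h₀ b) _ x := fun x hx =>
    hasDerivAt_h₀ b hx.1.ne'
  refine strictAntiOn_of_deriv_neg (convex_Ioo 0 ρ)
    (fun x hx => (hderiv x hx).continuousAt.continuousWithinAt) fun x hx => ?_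
  rw [interior_Ioo] at hx
  rw [(hderiv x hx).deriv]
  have hw : 0 < w b x := hpos x hx.1 hx.2
  have hK := one_sub_mul_exp_lt_one hx.1.ne'
  have hq := one_lt_one_sub_add_sq_div_two_mul_exp hx.1
  have hexp : 0 < exp x - 1 := sub_pos.mpr (one_lt_exp_iff.mpr hx.1)
  refine div_neg_of_neg_of_pos ?_ (pow_pos hexp 3)
  linarith [mul_pos hexp (sub_pos.mpr hq), mul_pos hw (sub_pos.mpr hK)]

theorem stmt_3 (b ρ : ℝ) (hb : 0 < b) (hρ : 0 < ρ)
    (hroot : (1 - ρ / 2) * Real.exp ρ + (b - 1) / 2 * ρ - 1 = 0)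
    (hpos : ∀ x : ℝ, 0 < x → x < ρ →
      0 < (1 - x / 2) * Real.exp x + (b - 1) / 2 * x - 1) :
    StrictAntiOn
      (fun x : ℝ => x * ((1 - x / 2) * Real.exp x + (b - 1) / 2 * x - 1) /
        (Real.exp x - 1) ^ 2)
      (Set.Ioo 0 ρ) :=
  stmt_3_general b ρ hpos
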